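/- arXiv:cs/0208017 — 7 statements merged into one kernel-verified Lean document; each statement's English description precedes it below -/
import Mathlib

section
/- For every KLM model S = (S, l, ≺), the KLM entailment C_KLM it defines satisfies cumulative transitivity (CT): for all sets of formulas T, T' with T' ⊆ C_KLM(T), one has C_KLM(T ∪ T') ⊆ C_KLM(T). -/
/-- Formulas of a propositional language over variables `V`. -/
inductive Formula (V : Type) : Type
  | var : V → Formula V
  | neg : Formula V → Formula V
  | and : Formula V → Formula V → Formula V
  | or  : Formula V → Formula V → Formula V
  | imp : Formula V → Formula V → Formula V

/-- Classical satisfaction of a formula by an interpretation `μ ⊆ V`. -/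
def Formula.Sat {V : Type} (μ : Set V) : Formula V → Prop
  | .var v => v ∈ μ
  | .neg φ => ¬ Formula.Sat μ φ
  | .and φ ψ => Formula.Sat μ φ ∧ Formula.Sat μ ψ
  | .or φ ψ => Formula.Sat μ φ ∨ Formula.Sat μ ψ
  | .imp φ ψ => Formula.Sat μ φ → Formula.Sat μ ψ

/-- Classical consequence: every model of `T` satisfies `φ`. -/
def Entails {V : Type} (T : Set (Formula V)) (φ : Formula V) : Prop :=
  ∀ μ : Set V, (∀ ψ ∈ T, Formula.Sat μ ψ) → Formula.Sat μ φ

/-- `Th T` = set of classical consequences of `T`. -/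
def Th {V : Type} (T : Set (Formula V)) : Set (Formula V) :=
  {φ | Entails T φ}

/-- A theory is a deductively closed set of formulas. -/
def IsTheory {V : Type} (T : Set (Formula V)) : Prop :=
  Th T = T

/-- A pre-circumscription: values are theories, it is extensive,
and it respects full logical equivalence. -/
def IsPreCirc {V : Type} (f : Set (Formula V) → Set (Formula V)) : Prop :=
  (∀ T, IsTheory (f T)) ∧ (∀ T, T ⊆ f T) ∧
  (∀ T₁ T₂, Th T₁ = Th T₂ → f T₁ = f T₂)

/-- For a KLM model with labelling `l`, the set `S(T)` of states satisfying `T`. -/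
def klmStates {V σ : Type} (l : σ → Set (Formula V)) (T : Set (Formula V)) : Set σ :=
  {s | Th T ⊆ l s}

/-- The set `S_≺(T)` of `≺`-minimal states among those satisfying `T` (KLM model). -/
def klmMin {V σ : Type} (l : σ → Set (Formula V)) (prec : σ → σ → Prop)
    (T : Set (Formula V)) : Set σ :=
  {s | s ∈ klmStates l T ∧ ∀ s' ∈ klmStates l T, ¬ prec s' s}

/-- The KLM entailment defined by a KLM model `(σ, l, prec)`. -/
def CKLM {V σ : Type} (l : σ → Set (Formula V)) (prec : σ → σ → Prop)
    (T : Set (Formula V)) : Set (Formula V) :=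
  {φ | ∀ s ∈ klmMin l prec T, φ ∈ l s}

/-- Smoothness (stopperedness) of a KLM model. -/
def klmSmooth {V σ : Type} (l : σ → Set (Formula V)) (prec : σ → σ → Prop) : Prop :=
  ∀ T : Set (Formula V), ∀ s ∈ klmStates l T, s ∉ klmMin l prec T →
    ∃ s' ∈ klmMin l prec T, prec s' s

/-- For a MAK model with satisfaction relation `sat`, the set `S(T)` of states
satisfying every formula of `T`. -/
def makStates {V σ : Type} (sat : σ → Formula V → Prop) (T : Set (Formula V)) : Set σ :=
  {s | ∀ φ ∈ T, sat s φ}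

/-- The set `S_≺(T)` of `≺`-minimal states among those satisfying `T` (MAK model). -/
def makMin {V σ : Type} (sat : σ → Formula V → Prop) (prec : σ → σ → Prop)
    (T : Set (Formula V)) : Set σ :=
  {s | s ∈ makStates sat T ∧ ∀ s' ∈ makStates sat T, ¬ prec s' s}

/-- The MAK entailment defined by a MAK model `(σ, sat, prec)`. -/
def CMAK {V σ : Type} (sat : σ → Formula V → Prop) (prec : σ → σ → Prop)
    (T : Set (Formula V)) : Set (Formula V) :=
  {φ | ∀ s ∈ makMin sat prec T, sat s φ}

/-- The (monotonic) Tarski entailment `Cn_⊨` of a MAK model. -/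
def Cn {V σ : Type} (sat : σ → Formula V → Prop) (T : Set (Formula V)) : Set (Formula V) :=
  {φ | ∀ s ∈ makStates sat T, sat s φ}

/-- The set `Cn_⊨(s)` of formulas satisfied by a state `s` of a MAK model. -/
def CnState {V σ : Type} (sat : σ → Formula V → Prop) (s : σ) : Set (Formula V) :=
  {φ | sat s φ}

/-- Every KLM entailment satisfies cumulative transitivity (CT). -/
theorem klm_satisfies_CT {V σ : Type} (l : σ → Set (Formula V)) (prec : σ → σ → Prop)
    (hl : ∀ s : σ, IsTheory (l s))
    (T T' : Set (Formula V)) (hT' : T' ⊆ CKLM l prec T) :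
    CKLM l prec (T ∪ T') ⊆ CKLM l prec T := by
  -- Key: every ≺-minimal state of T is a ≺-minimal state of T ∪ T'.
  have hmin : klmMin l prec T ⊆ klmMin l prec (T ∪ T') := by
    intro s hs
    have hsT : Th T ⊆ l s := hs.1
    -- s satisfies T ∪ T'
    have hsub : T ∪ T' ⊆ l s := by
      intro φ hφ
      rcases hφ with hφ | hφ
      · exact hsT (fun μ hμ => hμ φ hφ)
      · exact hT' hφ s hs
    have hstate : s ∈ klmStates l (T ∪ T') := by
      intro φ hφ
      rw [← hl s]
      intro μ hμ
      exact hφ μ (fun ψ hψ => hμ ψ (hsub hψ))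
    refine ⟨hstate, fun s' hs' => ?_⟩
    -- any state of T ∪ T' is a state of T
    have : s' ∈ klmStates l T := by
      intro φ hφ
      exact hs' (fun μ hμ => hφ μ (fun ψ hψ => hμ ψ (Or.inl hψ)))
    exact hs.2 s' this
  intro φ hφ s hs
  exact hφ s (hmin hs)
end

section
/- Every pre-circumscription satisfying cumulative transitivity (CT) is a KLM entailment: if f is a pre-circumscription such that for all T, T' with T' ⊆ f(T) one has f(T ∪ T') ⊆ f(T), then there exists a KLM model (S, l, ≺) whose KLM entailment C_KLM equals f on all sets of formulas. -/
/-!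
Take as states the sets `U` of formulas, labelled `f U`, together with auxiliary states `U'`
labelled `Th U'`, which are never minimal and lie below the state `U` whenever `U ⊄ Th U'`. The minimal
states for `T` are then exactly the `U` with `U ⊆ Th T ⊆ f U`. For such `U`, cumulative
transitivity gives `f (U ∪ T) ⊆ f U`, and `f (U ∪ T) = f T` because `Th (U ∪ T) = Th T`.
Since `U = T` is among them, the intersection of their labels is `f T`.
-/

section Consequence

variable {V : Type}

lemma subset_Th (T : Set (Formula V)) : T ⊆ Th T :=
  fun _ hφ _ hμ => hμ _ hφ

lemma Th_mono {T T' : Set (Formula V)} (h : T ⊆ T') : Th T ⊆ Th T' :=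
  fun _ hφ μ hμ => hφ μ fun ψ hψ => hμ ψ (h hψ)

lemma isTheory_Th (T : Set (Formula V)) : IsTheory (Th T) :=
  Set.Subset.antisymm (fun _ hφ μ hμ => hφ μ fun _ hψ => hψ μ hμ) (subset_Th _)

lemma IsTheory.Th_subset {T S : Set (Formula V)} (hS : IsTheory S) (h : T ⊆ S) :
    Th T ⊆ S :=
  hS ▸ Th_mono h

lemma Th_union_of_subset_Th {U T : Set (Formula V)} (h : U ⊆ Th T) : Th (U ∪ T) = Th T :=
  Set.Subset.antisymm ((isTheory_Th T).Th_subset (Set.union_subset h (subset_Th T)))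
    (Th_mono Set.subset_union_right)

end Consequence

section CumulativeTransitivity

variable {V : Type} {f : Set (Formula V) → Set (Formula V)}

lemma IsPreCirc.Th_subset (hf : IsPreCirc f) (T : Set (Formula V)) : Th T ⊆ f T :=
  (hf.1 T).Th_subset (hf.2.1 T)

lemma subset_of_cumulativeTransitivity (hcong : ∀ T₁ T₂, Th T₁ = Th T₂ → f T₁ = f T₂)
    (hCT : ∀ T T' : Set (Formula V), T' ⊆ f T → f (T ∪ T') ⊆ f T)
    {U T : Set (Formula V)} (hUT : U ⊆ Th T) (hTU : T ⊆ f U) : f T ⊆ f U :=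
  hcong _ _ (Th_union_of_subset_Th hUT) ▸ hCT U T hTU

end CumulativeTransitivity

section CanonicalModel

variable {V : Type} (f : Set (Formula V) → Set (Formula V))

def canonicalLabel : Set (Formula V) ⊕ Set (Formula V) → Set (Formula V)
  | .inl U => f U
  | .inr U => Th U

def canonicalPrec :
    Set (Formula V) ⊕ Set (Formula V) → Set (Formula V) ⊕ Set (Formula V) → Prop
  | .inr U', .inl U => ¬ U ⊆ Th U'
  | .inl _, .inl _ => False
  | _, .inr _ => True

lemma isTheory_canonicalLabel (hf : ∀ T, IsTheory (f T)) :
    ∀ s, IsTheory (canonicalLabel f s)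
  | .inl U => hf U
  | .inr U => isTheory_Th U

lemma inr_not_mem_klmMin_canonical (U T : Set (Formula V)) :
    Sum.inr U ∉ klmMin (canonicalLabel f) canonicalPrec T :=
  fun h => h.2 _ h.1 trivial

lemma inl_mem_klmMin_canonical_iff {U T : Set (Formula V)} :
    Sum.inl U ∈ klmMin (canonicalLabel f) canonicalPrec T ↔ Th T ⊆ f U ∧ U ⊆ Th T := by
  constructor
  · rintro ⟨hTU, hmin⟩
    refine ⟨hTU, ?_⟩
    by_contra hUT
    exact hmin (Sum.inr T) (subset_refl (Th T)) hUT
  · rintro ⟨hTU, hUT⟩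
    refine ⟨hTU, ?_⟩
    rintro (U' | U') hU' hprec
    · exact hprec
    · exact hprec (hUT.trans hU')

lemma CKLM_canonical_eq (hf : IsPreCirc f)
    (hCT : ∀ T T' : Set (Formula V), T' ⊆ f T → f (T ∪ T') ⊆ f T) (T : Set (Formula V)) :
    CKLM (canonicalLabel f) canonicalPrec T = f T := by
  ext φ
  constructor
  · intro hφ
    exact hφ (Sum.inl T) ((inl_mem_klmMin_canonical_iff f).2 ⟨hf.Th_subset T, subset_Th T⟩)
  · rintro hφ (U | U) hmin
    · obtain ⟨hTU, hUT⟩ := (inl_mem_klmMin_canonical_iff f).1 hmin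
      exact subset_of_cumulativeTransitivity hf.2.2 hCT hUT ((subset_Th T).trans hTU) hφ
    · exact absurd hmin (inr_not_mem_klmMin_canonical f U T)

end CanonicalModel

/-- Every pre-circumscription satisfying (CT) is a KLM entailment. -/
theorem preCirc_CT_is_klm {V : Type} (f : Set (Formula V) → Set (Formula V))
    (hf : IsPreCirc f)
    (hCT : ∀ T T' : Set (Formula V), T' ⊆ f T → f (T ∪ T') ⊆ f T) :
    ∃ (σ : Type) (l : σ → Set (Formula V)) (prec : σ → σ → Prop),
      (∀ s : σ, IsTheory (l s)) ∧ ∀ T : Set (Formula V), CKLM l prec T = f T :=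
  ⟨_, canonicalLabel f, canonicalPrec, isTheory_canonicalLabel f hf.1,
    CKLM_canonical_eq f hf hCT⟩
end

section
/- Every MAK entailment is idempotent: for every MAK model (S, ⊨, ≺) and every set of formulas T, C_MAK(C_MAK(T)) = C_MAK(T). -/
/-- Every MAK entailment is idempotent. -/
theorem mak_idempotent {V σ : Type} (sat : σ → Formula V → Prop) (prec : σ → σ → Prop)
    (T : Set (Formula V)) :
    CMAK sat prec (CMAK sat prec T) = CMAK sat prec T := by
  have hTsub : T ⊆ CMAK sat prec T := fun φ hφ s hs => hs.1 φ hφ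
  have hmin : makMin sat prec T ⊆ makMin sat prec (CMAK sat prec T) := by
    intro s hs
    refine ⟨fun φ hφ => hφ s hs, fun s' hs' hp => hs.2 s' (fun ψ hψ => hs' ψ (hTsub hψ)) hp⟩
  ext φ
  constructor
  · intro h s hs
    exact h s (hmin hs)
  · intro h s hs
    exact hs.1 φ h
end

section
/- For each KLM model (S, l, ≺), the MAK model (S, ⊨, ≺) with the same set of states and the same preference relation, where s ⊨ φ is defined to hold iff φ ∈ l(s), defines a MAK entailment C_MAK equal to the KLM entailment C_KLM of the original KLM model. -/
/-- For each KLM model `(S, l, ≺)`, the MAK model with the same states and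
preference relation, where `s ⊨ φ` iff `φ ∈ l s`, defines the same entailment. -/
theorem klm_as_mak {V σ : Type} (l : σ → Set (Formula V)) (prec : σ → σ → Prop)
    (hl : ∀ s : σ, IsTheory (l s)) :
    ∀ T : Set (Formula V), CMAK (fun s φ => φ ∈ l s) prec T = CKLM l prec T := by
  intro T
  have hstates : makStates (fun s φ => φ ∈ l s) T = klmStates l T := by
    ext s
    constructor
    · intro h φ hφ
      rw [← (hl s)]
      exact fun μ hμ => hφ μ (fun ψ hψ => hμ ψ (h ψ hψ))
    · intro h φ hφ
      exact h (fun μ hμ => hμ φ hφ)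
  simp only [CMAK, CKLM, makMin, klmMin, hstates]
end

section
/- For a MAK model (S, ⊨, ≺), the following three conditions are equivalent: (i) the model is supra classical (Th(Cn_⊨(s)) = Cn_⊨(s) for every state s); (ii) the entailment Cn_⊨ is supra classical (Th(T) ⊆ Cn_⊨(T) for every T ⊆ L); (iii) the entailment Cn_⊨ is a pre-circumscription. -/
/-- For a MAK model, the following are equivalent: (i) the model is supra
classical; (ii) `Cn_⊨` is supra classical; (iii) `Cn_⊨` is a pre-circumscription. -/

theorem supra_tfae {V σ : Type} (sat : σ → Formula V → Prop) (prec : σ → σ → Prop) :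
    List.TFAE [
      ∀ s : σ, Th (CnState sat s) = CnState sat s,
      ∀ T : Set (Formula V), Th T ⊆ Cn sat T,
      IsPreCirc (Cn (V := V) (σ := σ) sat)] := by
  have thMono : ∀ (T₁ T₂ : Set (Formula V)), T₁ ⊆ T₂ → Th T₁ ⊆ Th T₂ := by
    intro T₁ T₂ h φ hφ μ hμ
    exact hφ μ (fun ψ hψ => hμ ψ (h hψ))
  have thExt : ∀ (T : Set (Formula V)), T ⊆ Th T := by
    intro T φ hφ μ hμ; exact hμ φ hφ
  have cnExt : ∀ (T : Set (Formula V)), T ⊆ Cn sat T := by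
    intro T φ hφ s hs; exact hs φ hφ
  tfae_have 1 → 2
  | h, T, φ, hφ, s, hs => by
    have hsub : T ⊆ CnState sat s := hs
    have := thMono _ _ hsub hφ
    rw [h s] at this
    exact this
  tfae_have 2 → 3
  | h => by
    have hst : ∀ T : Set (Formula V), makStates sat T = makStates sat (Th T) := by
      intro T
      ext s
      constructor
      · intro hs φ hφ
        exact h T hφ s hs
      · intro hs φ hφ
        exact hs φ (thExt T hφ)
    refine ⟨?_, cnExt, ?_⟩
    · intro T
      have hCC : Cn sat (Cn sat T) = Cn sat T := by
        apply Set.Subset.antisymm _ (cnExt _)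
        intro φ hφ s hs
        exact hφ s (fun ψ hψ => hψ s hs)
      apply Set.Subset.antisymm _ (thExt _)
      intro φ hφ
      rw [← hCC]
      exact h (Cn sat T) hφ
    · intro T₁ T₂ he
      unfold Cn
      rw [hst T₁, hst T₂, he]
  tfae_have 3 → 1
  | ⟨hth, hext, _⟩, s => by
    apply Set.Subset.antisymm _ (thExt _)
    have h1 : Cn sat (CnState sat s) ⊆ CnState sat s := by
      intro φ hφ
      exact hφ s (fun ψ hψ => hψ)
    intro φ hφ
    apply h1
    rw [← hth (CnState sat s)]
    exact thMono _ _ (hext _) hφ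
  tfae_finish
end

section
/- If a MAK model S = (S, ⊨, ≺) is supra classical, then the KLM model S' = (S, l, ≺) with the same states and preference relation and with l(s) = Cn_⊨(s) for each state s defines a KLM entailment equal to the MAK entailment defined by S; in particular, the MAK entailment of any supra classical MAK model is a KLM entailment. -/
/-- If a MAK model is supra classical, then the KLM model with the same
states and preference relation, labelled by `l s = Cn_⊨(s)`, defines a KLM entailment
equal to the MAK entailment; in particular the MAK entailment of any supra classical
MAK model is a KLM entailment. -/
theorem supra_mak_is_klm {V σ : Type} (sat : σ → Formula V → Prop) (prec : σ → σ → Prop)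
    (h : ∀ s : σ, Th (CnState sat s) = CnState sat s) :
    (∀ T : Set (Formula V), CKLM (fun s => CnState sat s) prec T = CMAK sat prec T) ∧
    (∃ (σ' : Type) (l : σ' → Set (Formula V)) (prec' : σ' → σ' → Prop),
      (∀ s : σ', IsTheory (l s)) ∧
      ∀ T : Set (Formula V), CKLM l prec' T = CMAK sat prec T) := by
  have hstates : ∀ T : Set (Formula V),
      klmStates (fun s => CnState sat s) T = makStates sat T := by
    intro T
    ext s
    constructor
    · intro hs φ hφ
      exact hs (fun μ hμ => hμ φ hφ)
    · intro hs φ hφ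
      show φ ∈ CnState sat s
      rw [← h s]
      intro μ hμ
      exact hφ μ (fun ψ hψ => hμ ψ (hs ψ hψ))
  have hmain : ∀ T : Set (Formula V),
      CKLM (fun s => CnState sat s) prec T = CMAK sat prec T := by
    intro T
    unfold CKLM CMAK klmMin makMin
    rw [hstates T]
    rfl
  exact ⟨hmain, σ, (fun s => CnState sat s), prec, fun s => h s, hmain⟩
end

section
/- A pre-circumscription C is cumulative (satisfies both (CT) and (CM)) if and only if C is the KLM entailment defined by some smooth KLM model. -/
private lemma th_mono {V : Type} {T U : Set (Formula V)} (h : T ⊆ U) : Th T ⊆ Th U :=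
  fun _ hφ μ hμ => hφ μ (fun ψ hψ => hμ ψ (h hψ))

private lemma subset_th {V : Type} (T : Set (Formula V)) : T ⊆ Th T :=
  fun _ hφ μ hμ => hμ _ hφ

private lemma th_subset_theory {V : Type} {A T : Set (Formula V)} (hA : IsTheory A)
    (h : T ⊆ A) : Th T ⊆ A := by
  rw [← hA]; exact th_mono h

/-- A pre-circumscription is cumulative (satisfies (CT) and (CM)) iff it
is the KLM entailment defined by some smooth KLM model. -/
theorem cumulative_iff_smooth_klm {V : Type} (C : Set (Formula V) → Set (Formula V))
    (hC : IsPreCirc C) :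
    ((∀ T T' : Set (Formula V), T' ⊆ C T → C (T ∪ T') ⊆ C T) ∧
     (∀ T T' : Set (Formula V), T' ⊆ C T → C T ⊆ C (T ∪ T'))) ↔
    ∃ (σ : Type) (l : σ → Set (Formula V)) (prec : σ → σ → Prop),
      (∀ s : σ, IsTheory (l s)) ∧ klmSmooth l prec ∧
      ∀ T : Set (Formula V), CKLM l prec T = C T := by
  obtain ⟨hth, hext, _⟩ := hC
  constructor
  · rintro ⟨hct, hcm⟩
    have ceq : ∀ T X : Set (Formula V), T ⊆ C X → X ⊆ C T → C X = C T := by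
      intro T X h1 h2
      have e1 : C (T ∪ X) = C T := Set.Subset.antisymm (hct T X h2) (hcm T X h2)
      have e2 : C (X ∪ T) = C X := Set.Subset.antisymm (hct X T h1) (hcm X T h1)
      rw [← e2, Set.union_comm, e1]
    refine ⟨Set (Formula V), C, fun X Y => X ⊆ C Y ∧ C X ≠ C Y, hth, ?_, ?_⟩
    · -- smoothness
      intro T s hs hns
      have hsT : T ⊆ C s := (subset_th T).trans hs
      have hTmin : T ∈ klmMin C (fun X Y => X ⊆ C Y ∧ C X ≠ C Y) T := by
        refine ⟨th_subset_theory (hth T) (hext T), ?_⟩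
        intro s' hs' hp
        have hT's : T ⊆ C s' := (subset_th T).trans hs'
        exact hp.2 (ceq T s' hT's hp.1)
      have hne : C T ≠ C s := by
        intro h
        apply hns
        refine ⟨hs, ?_⟩
        intro s' hs' hp
        have hT's : T ⊆ C s' := (subset_th T).trans hs'
        have : C s' = C T := ceq T s' hT's (hp.1.trans_eq h.symm)
        exact hp.2 (this.trans h)
      exact ⟨T, hTmin, hsT, hne⟩
    · -- CKLM = C
      intro T
      have hminchar : ∀ X, X ∈ klmMin C (fun X Y => X ⊆ C Y ∧ C X ≠ C Y) T ↔ C X = C T := by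
        intro X
        constructor
        · rintro ⟨hXs, hXmin⟩
          by_contra hne
          have hTX : T ⊆ C X := (subset_th T).trans hXs
          exact hXmin T (th_subset_theory (hth T) (hext T)) ⟨hTX, fun h => hne h.symm⟩
        · intro hXe
          refine ⟨th_subset_theory (hth X) ?_, ?_⟩
          · exact (hext T).trans hXe.symm.subset
          · intro s' hs' hp
            have hT's : T ⊆ C s' := (subset_th T).trans hs'
            have : C s' = C T := ceq T s' hT's (hp.1.trans hXe.subset)
            exact hp.2 (this.trans hXe.symm)
      ext φ
      constructor
      · intro hφ
        exact hφ T ((hminchar T).mpr rfl)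
      · intro hφ X hX
        exact ((hminchar X).mp hX) ▸ hφ
  · rintro ⟨σ, l, prec, hthl, hsmooth, heq⟩
    have key : ∀ T T' : Set (Formula V), T' ⊆ C T →
        klmMin l prec (T ∪ T') = klmMin l prec T := by
      intro T T' hT'
      have hS : klmStates l (T ∪ T') ⊆ klmStates l T :=
        fun s hs => (th_mono Set.subset_union_left).trans hs
      have hminS : ∀ s ∈ klmMin l prec T, s ∈ klmStates l (T ∪ T') := by
        intro s hs
        show Th (T ∪ T') ⊆ l s
        apply th_subset_theory (hthl s)
        intro φ hφ
        rcases hφ with h | h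
        · exact hs.1 (subset_th T h)
        · have hφC : φ ∈ C T := hT' h
          rw [← heq T] at hφC
          exact hφC s hs
      apply Set.Subset.antisymm
      · intro s hs
        by_contra hns
        have hsT : s ∈ klmStates l T := hS hs.1
        have hnsT : s ∉ klmMin l prec T := hns
        rcases hsmooth T s hsT hnsT with ⟨s', hs', hprec⟩
        exact hs.2 s' (hminS s' hs') hprec
      · intro s hs
        exact ⟨hminS s hs, fun s' hs' => hs.2 s' (hS hs')⟩
    have keyC : ∀ T T' : Set (Formula V), T' ⊆ C T → C (T ∪ T') = C T := by
      intro T T' h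
      rw [← heq T, ← heq (T ∪ T')]
      unfold CKLM
      rw [key T T' h]
    exact ⟨fun T T' h => (keyC T T' h).subset, fun T T' h => (keyC T T' h).symm.subset⟩
end
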